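/- Fix d,r∈ℕ and p∈[1,∞]. Let Φ=(φ^1,…,φ^r) be measurable functions on ℝ^d with ‖φ^i‖_{W^1}<∞ for each i, and let C=(c^1,…,c^r)∈(ℓ^p(ℤ^d))^{(r)}. Then the series f(x) = ∑_{k∈ℤ^d}∑_{i=1}^r c^i(k)φ^i(x−k) converges absolutely for almost every x∈ℝ^d and the resulting function satisfies ‖f‖_{W^p} ≤ ‖C‖_{(ℓ^p(ℤ^d))^{(r)}} · ‖Φ‖_{(W^1)^{(r)}}. -/

import Mathlib

open MeasureTheory ENNReal

noncomputable section

abbrev Euc (d : ℕ) := EuclideanSpace ℝ (Fin d)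

/-- Embedding of `ℤ^d` into `ℝ^d`. -/
def zemb {d : ℕ} (k : Fin d → ℤ) : Euc d := WithLp.toLp 2 (fun i => (k i : ℝ))

/-- `ess sup_{x ∈ [0,1]^d} |f(x+k)|`, valued in `ℝ≥0∞`. -/
def cubeSup {d : ℕ} (f : Euc d → ℂ) (k : Fin d → ℤ) : ℝ≥0∞ :=
  essSup (fun x => (‖f (x + zemb k)‖₊ : ℝ≥0∞))
    (volume.restrict {x : Euc d | ∀ i, x i ∈ Set.Icc (0:ℝ) 1})

/-- The Wiener amalgam norm `‖f‖_{W^p}`. -/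
def WNorm {d : ℕ} (p : ℝ≥0∞) (f : Euc d → ℂ) : ℝ≥0∞ :=
  if p = ∞ then ⨆ k : Fin d → ℤ, cubeSup f k
  else (∑' k : Fin d → ℤ, cubeSup f k ^ p.toReal) ^ (1 / p.toReal)

/-- Membership in `W₀^1`: continuous with finite `W^1` norm. -/
def MemW01 {d : ℕ} (f : Euc d → ℂ) : Prop := Continuous f ∧ WNorm 1 f < ∞

/-- `(W^1)^{(r)}` norm of a vector of functions. -/
def WNormVec {d r : ℕ} (Φ : Fin r → Euc d → ℂ) : ℝ≥0∞ := ∑ i, WNorm 1 (Φ i)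

/-- the `ℓ^p` norm of a family of complex numbers, valued in `ℝ≥0∞`. -/
def lpNorm {ι : Type*} (p : ℝ≥0∞) (c : ι → ℂ) : ℝ≥0∞ :=
  if p = ∞ then ⨆ j, (‖c j‖₊ : ℝ≥0∞)
  else (∑' j, (‖c j‖₊ : ℝ≥0∞) ^ p.toReal) ^ (1 / p.toReal)

/-- The `(ℓ^p(ℤ^d))^{(r)}` norm `‖C‖ = ∑_i ‖c^i‖_{ℓ^p}`. -/
def vlpNorm {d r : ℕ} (p : ℝ≥0∞) (C : Fin r → (Fin d → ℤ) → ℂ) : ℝ≥0∞ :=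
  ∑ i, lpNorm p (C i)

/-- `f_C = ∑_{k ∈ ℤ^d} ∑_i c^i(k) φ^i(· - k)`. -/
def genFun {d r : ℕ} (Φ : Fin r → Euc d → ℂ) (C : Fin r → (Fin d → ℤ) → ℂ)
    (x : Euc d) : ℂ :=
  ∑' k : Fin d → ℤ, ∑ i, C i k * Φ i (x - zemb k)

/-- Integral of a complex-valued function against a finite complex Borel measure,
via the Jordan decompositions of the real and imaginary parts. -/
def cInt {d : ℕ} (μ : ComplexMeasure (Euc d)) (f : Euc d → ℂ) : ℂ :=
  ((∫ x, f x ∂(ComplexMeasure.re μ).toJordanDecomposition.posPart) -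
    (∫ x, f x ∂(ComplexMeasure.re μ).toJordanDecomposition.negPart)) +
  Complex.I * ((∫ x, f x ∂(ComplexMeasure.im μ).toJordanDecomposition.posPart) -
    (∫ x, f x ∂(ComplexMeasure.im μ).toJordanDecomposition.negPart))

/-- The convolution `(φ ∗ μ)(x) = ∫ φ(x - y) dμ(y)`. -/
def mconv {d : ℕ} (μ : ComplexMeasure (Euc d)) (φ : Euc d → ℂ) (x : Euc d) : ℂ :=
  cInt μ (fun y => φ (x - y))

/-- The total variation norm `|μ|(ℝ^d)` of a finite complex Borel measure, as the
supremum of `∑ ‖μ(S_i)‖` over finite disjoint families of measurable sets. -/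
def cmNorm {d : ℕ} (μ : ComplexMeasure (Euc d)) : ℝ≥0∞ :=
  ⨆ (n : ℕ) (S : Fin n → Set (Euc d)) (_ : ∀ i, MeasurableSet (S i))
    (_ : Pairwise (Function.onFun Disjoint S)), ∑ i, (‖μ (S i)‖₊ : ℝ≥0∞)

/-- norm of a vector of complex measures. -/
def cmNormVec {d t : ℕ} (μ : Fin t → ComplexMeasure (Euc d)) : ℝ≥0∞ :=
  ∑ l, cmNorm (μ l)

/-- The Riesz condition with explicit constants. -/
def RieszWith {d r : ℕ} (p : ℝ≥0∞) (Φ : Fin r → Euc d → ℂ) (m M : ℝ) : Prop :=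
  0 < m ∧ m ≤ M ∧ ∀ C : Fin r → (Fin d → ℤ) → ℂ, vlpNorm p C < ∞ →
    ENNReal.ofReal m * vlpNorm p C ≤ eLpNorm (genFun Φ C) p volume ∧
    eLpNorm (genFun Φ C) p volume ≤ ENNReal.ofReal M * vlpNorm p C

/-- The Riesz (unconditional basis) condition for `p`. -/
def RieszCond {d r : ℕ} (p : ℝ≥0∞) (Φ : Fin r → Euc d → ℂ) : Prop :=
  ∃ m M : ℝ, RieszWith p Φ m M

/-- `X` is a `μ⃗`-sampling set for `V^p(Φ)`. -/
def SamplingSet {d r t : ℕ} {J : Type*} (p : ℝ≥0∞) (Φ : Fin r → Euc d → ℂ)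
    (μ : Fin t → ComplexMeasure (Euc d)) (X : J → Euc d) : Prop :=
  ∃ A B : ℝ, 0 < A ∧ A ≤ B ∧ ∀ C : Fin r → (Fin d → ℤ) → ℂ, vlpNorm p C < ∞ →
    ENNReal.ofReal A * eLpNorm (genFun Φ C) p volume ≤
      ∑ l, lpNorm p (fun j => mconv (μ l) (genFun Φ C) (X j)) ∧
    ∑ l, lpNorm p (fun j => mconv (μ l) (genFun Φ C) (X j)) ≤
      ENNReal.ofReal B * eLpNorm (genFun Φ C) p volume

/-- `X` is separated with constant `δ`. -/
def SeparatedWith {d : ℕ} {J : Type*} (X : J → Euc d) (δ : ℝ) : Prop :=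
  ∀ i j : J, i ≠ j → δ ≤ dist (X i) (X j)

def SeparatedSet {d : ℕ} {J : Type*} (X : J → Euc d) : Prop :=
  ∃ δ : ℝ, 0 < δ ∧ SeparatedWith X δ

/-- Membership in `M_s(ℝ^d)`: `∫ (1+|x|)^s d|μ| < ∞`, expressed via the Jordan
decompositions of the real and imaginary parts. -/
def MemMs {d : ℕ} (s : ℝ) (μ : ComplexMeasure (Euc d)) : Prop :=
  (∫⁻ x, ENNReal.ofReal ((1 + ‖x‖) ^ s) ∂(ComplexMeasure.re μ).toJordanDecomposition.posPart < ∞) ∧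
  (∫⁻ x, ENNReal.ofReal ((1 + ‖x‖) ^ s) ∂(ComplexMeasure.re μ).toJordanDecomposition.negPart < ∞) ∧
  (∫⁻ x, ENNReal.ofReal ((1 + ‖x‖) ^ s) ∂(ComplexMeasure.im μ).toJordanDecomposition.posPart < ∞) ∧
  (∫⁻ x, ENNReal.ofReal ((1 + ‖x‖) ^ s) ∂(ComplexMeasure.im μ).toJordanDecomposition.negPart < ∞)

/-- `Φ ∈ W_s`: an `s`-localized Riesz generator. -/
def MemWs {d r : ℕ} (s : ℝ) (Φ : Fin r → Euc d → ℂ) : Prop :=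
  (∀ i, MemW01 (Φ i)) ∧ RieszCond 2 Φ ∧
    ∀ i, ∃ C0 : ℝ, 0 < C0 ∧ ∀ x : Euc d, ‖Φ i x‖ ≤ C0 * (1 + ‖x‖) ^ (-s)

end


/-! On the cube `n + [0,1]^d`, almost every `x` satisfies `|φⁱ(x - k)| ≤ aⁱ(n - k)` for all `k` and
`i` at once (countably many conditions), where `aⁱ(m) = ess sup_{[0,1]^d} |φⁱ(· + m)|`. There the
series is dominated by the discrete convolution `F(n) = ∑ᵢ (|cⁱ| ∗ aⁱ)(n)`, and Young's inequality
`‖|cⁱ| ∗ aⁱ‖_{ℓ^p} ≤ ‖aⁱ‖_{ℓ^1} ‖cⁱ‖_{ℓ^p}` bounds `F` in `ℓ^p`, hence pointwise. This gives both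
the absolute convergence and the `W^p` bound. Sequence norms are read as `eLpNorm` for the counting
measure, so that `p = ∞` needs no separate treatment. -/

open MeasureTheory ENNReal

section CountableMinkowski

variable {α : Type*} [MeasurableSpace α] {μ : Measure α} {p : ℝ≥0∞}

theorem eLpNorm_tsum_le {ι : Type*} [Countable ι] {f : ι → α → ℝ≥0∞}
    (hf : ∀ i, AEMeasurable (f i) μ) (hp : 1 ≤ p) :
    eLpNorm (fun x => ∑' i, f i x) p μ ≤ ∑' i, eLpNorm (f i) p μ := by
  rcases eq_or_ne p ∞ with rfl | hp_top
  · have hbound : ∀ᵐ x ∂μ, ∀ i, f i x ≤ eLpNorm (f i) ∞ μ :=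
      ae_all_iff.2 fun i => by simpa using ae_le_eLpNormEssSup (f := f i) (μ := μ)
    rw [eLpNorm_exponent_top]
    refine essSup_le_of_ae_le _ ?_
    filter_upwards [hbound] with x hx
    simpa using ENNReal.tsum_le_tsum hx
  have hp0 : p ≠ 0 := (zero_lt_one.trans_le hp).ne'
  have hq : 0 < p.toReal := ENNReal.toReal_pos hp0 hp_top
  set B := ∑' i, eLpNorm (f i) p μ
  have hpartial : ∀ s : Finset ι, ∫⁻ x, (∑ i ∈ s, f i x) ^ p.toReal ∂μ ≤ B ^ p.toReal := by
    intro s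
    have hs : eLpNorm (∑ i ∈ s, f i) p μ ≤ B :=
      (eLpNorm_sum_le (fun i _ => (hf i).aestronglyMeasurable) hp).trans (ENNReal.sum_le_tsum s)
    rw [eLpNorm_eq_lintegral_rpow_enorm_toReal hp0 hp_top, one_div,
      ENNReal.rpow_inv_le_iff hq] at hs
    simpa only [Finset.sum_apply, enorm_eq_self] using hs
  rw [eLpNorm_eq_lintegral_rpow_enorm_toReal hp0 hp_top, one_div, ENNReal.rpow_inv_le_iff hq]
  calc ∫⁻ x, ‖∑' i, f i x‖ₑ ^ p.toReal ∂μ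
      = ∫⁻ x, ⨆ s : Finset ι, (∑ i ∈ s, f i x) ^ p.toReal ∂μ := by
        simp only [enorm_eq_self, ENNReal.tsum_eq_iSup_sum]
        exact lintegral_congr fun x => (ENNReal.orderIsoRpow _ hq).map_iSup _
    _ = ⨆ s : Finset ι, ∫⁻ x, (∑ i ∈ s, f i x) ^ p.toReal ∂μ :=
        lintegral_iSup_directed
          (fun s => (Finset.aemeasurable_fun_sum s fun i _ => hf i).pow_const _)
          (Monotone.directed_le fun s t hst x => by gcongr)
    _ ≤ B ^ p.toReal := iSup_le hpartial

end CountableMinkowski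

section CountingMeasure

variable {G : Type*} [MeasurableSpace G] [MeasurableSingletonClass G] {p : ℝ≥0∞}

theorem eLpNorm_count_eq_tsum {ε : Type*} [TopologicalSpace ε] [ContinuousENorm ε]
    (hp0 : p ≠ 0) (hp_top : p ≠ ∞) (u : G → ε) :
    eLpNorm u p Measure.count = (∑' j, ‖u j‖ₑ ^ p.toReal) ^ (1 / p.toReal) := by
  rw [eLpNorm_eq_lintegral_rpow_enorm_toReal hp0 hp_top, lintegral_count]

theorem eLpNorm_top_count {ε : Type*} [TopologicalSpace ε] [ContinuousENorm ε] (u : G → ε) :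
    eLpNorm u ∞ Measure.count = ⨆ j, ‖u j‖ₑ := by
  rw [eLpNorm_exponent_top, eLpNormEssSup, essSup_count]

theorem eLpNorm_conv_count_le [Countable G] [AddCommGroup G] [MeasurableAdd G] (b a : G → ℝ≥0∞)
    (hp : 1 ≤ p) :
    eLpNorm (fun n => ∑' k, b k * a (n - k)) p Measure.count ≤
      (∑' k, a k) * eLpNorm b p Measure.count := by
  have hcomm : ∀ n, ∑' k, b k * a (n - k) = ∑' m, a m * b (n - m) := fun n => by
    rw [← (Equiv.subLeft n).tsum_eq]
    simp [Equiv.subLeft_apply, mul_comm]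
  have htranslate : ∀ m, eLpNorm (fun n => b (n - m)) p Measure.count =
      eLpNorm b p Measure.count := fun m =>
    eLpNorm_comp_measurePreserving (measurable_of_countable b).aestronglyMeasurable
      (measurePreserving_sub_right _ m)
  simp_rw [hcomm]
  calc eLpNorm (fun n => ∑' m, a m * b (n - m)) p Measure.count
      ≤ ∑' m, eLpNorm (fun n => a m * b (n - m)) p Measure.count :=
        eLpNorm_tsum_le (fun m => (measurable_of_countable _).aemeasurable) hp
    _ ≤ ∑' m, a m * eLpNorm b p Measure.count := by
        gcongr with m
        rw [← htranslate m]
        exact eLpNorm_le_mul_eLpNorm_of_ae_le_mul'' p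
          (measurable_of_countable _).aestronglyMeasurable (ae_of_all _ fun n => le_rfl)
    _ = (∑' k, a k) * eLpNorm b p Measure.count := ENNReal.tsum_mul_right

end CountingMeasure

theorem lpNorm_eq_eLpNorm_count {ι : Type*} [MeasurableSpace ι] [MeasurableSingletonClass ι]
    {p : ℝ≥0∞} (hp : p ≠ 0) (c : ι → ℂ) : lpNorm p c = eLpNorm c p Measure.count := by
  rcases eq_or_ne p ∞ with rfl | hp_top
  · rw [_root_.lpNorm, if_pos rfl, eLpNorm_top_count]; rfl
  · rw [_root_.lpNorm, if_neg hp_top, eLpNorm_count_eq_tsum hp hp_top]; rfl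

section Lattice

variable {d : ℕ}

theorem WNorm_eq_eLpNorm_count {p : ℝ≥0∞} (hp : p ≠ 0) (f : Euc d → ℂ) :
    WNorm p f = eLpNorm (cubeSup f) p Measure.count := by
  rcases eq_or_ne p ∞ with rfl | hp_top
  · simp only [WNorm, if_pos, eLpNorm_top_count, enorm_eq_self]
  · simp only [WNorm, if_neg hp_top, eLpNorm_count_eq_tsum hp hp_top, enorm_eq_self]

theorem WNorm_one (f : Euc d → ℂ) : WNorm 1 f = ∑' k, cubeSup f k := by
  simp [WNorm]

def unitCube (d : ℕ) : Set (Euc d) := {x | ∀ i, x i ∈ Set.Icc (0 : ℝ) 1}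

theorem zemb_sub (k l : Fin d → ℤ) : zemb (k - l) = zemb k - zemb l := by
  ext j
  simp [zemb]

theorem exists_sub_zemb_mem_unitCube (x : Euc d) : ∃ n, x - zemb n ∈ unitCube d :=
  ⟨fun j => ⌊x j⌋, fun j => by
    simp [zemb, Int.self_sub_floor, Int.fract_nonneg, (Int.fract_lt_one _).le]⟩

/-- The integer translates of the unit cube cover `ℝ^d`. -/
theorem ae_of_forall_ae_unitCube {P : Euc d → Prop}
    (h : ∀ n, ∀ᵐ y ∂volume.restrict (unitCube d), P (y + zemb n)) : ∀ᵐ x, P x := by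
  have htranslates : ∀ᵐ x, ∀ n, x - zemb n ∈ unitCube d → P x := ae_all_iff.2 fun n => by
    simpa using (measurePreserving_sub_right volume (zemb n)).quasiMeasurePreserving.ae
      (ae_imp_of_ae_restrict (h n))
  filter_upwards [htranslates] with x hx
  obtain ⟨n, hn⟩ := exists_sub_zemb_mem_unitCube x
  exact hx n hn

theorem ae_enorm_le_cubeSup (f : Euc d → ℂ) (k : Fin d → ℤ) :
    ∀ᵐ y ∂volume.restrict (unitCube d), ‖f (y + zemb k)‖ₑ ≤ cubeSup f k :=
  ENNReal.ae_le_essSup _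

end Lattice

section GeneratedFunction

variable {d r : ℕ} (Φ : Fin r → Euc d → ℂ) (C : Fin r → (Fin d → ℤ) → ℂ)

noncomputable def genMajorant (n : Fin d → ℤ) : ℝ≥0∞ :=
  ∑ i, ∑' k, ‖C i k‖ₑ * cubeSup (Φ i) (n - k)

theorem enorm_genFun_le (x : Euc d) :
    ‖genFun Φ C x‖ₑ ≤ ∑' q : (Fin d → ℤ) × Fin r, ‖C q.2 q.1 * Φ q.2 (x - zemb q.1)‖ₑ := by
  rw [ENNReal.tsum_prod']
  refine enorm_tsum_le_tsum_enorm.trans (ENNReal.tsum_le_tsum fun k => ?_)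
  rw [tsum_fintype]
  exact enorm_sum_le _ _

theorem ae_tsum_enorm_le_genMajorant (n : Fin d → ℤ) :
    ∀ᵐ y ∂volume.restrict (unitCube d),
      ∑' q : (Fin d → ℤ) × Fin r, ‖C q.2 q.1 * Φ q.2 (y + zemb n - zemb q.1)‖ₑ ≤
        genMajorant Φ C n := by
  have hcube : ∀ᵐ y ∂volume.restrict (unitCube d),
      ∀ k i, ‖Φ i (y + zemb (n - k))‖ₑ ≤ cubeSup (Φ i) (n - k) :=
    ae_all_iff.2 fun k => ae_all_iff.2 fun i => ae_enorm_le_cubeSup _ _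
  filter_upwards [hcube] with y hy
  rw [ENNReal.tsum_prod', ENNReal.tsum_comm, genMajorant, tsum_fintype]
  gcongr with i _ k
  rw [enorm_mul, add_sub_assoc, ← zemb_sub]
  gcongr
  exact hy k i

theorem cubeSup_genFun_le (n : Fin d → ℤ) : cubeSup (genFun Φ C) n ≤ genMajorant Φ C n :=
  essSup_le_of_ae_le _ <| (ae_tsum_enorm_le_genMajorant Φ C n).mono fun y hy =>
    (enorm_genFun_le Φ C _).trans hy

theorem eLpNorm_genMajorant_le {p : ℝ≥0∞} (hp : 1 ≤ p) :
    eLpNorm (genMajorant Φ C) p Measure.count ≤ vlpNorm p C * WNormVec Φ := by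
  have hp0 : p ≠ 0 := (zero_lt_one.trans_le hp).ne'
  calc eLpNorm (genMajorant Φ C) p Measure.count
      = eLpNorm (∑ i, fun n => ∑' k, ‖C i k‖ₑ * cubeSup (Φ i) (n - k)) p Measure.count := by
        congr 1
        ext n
        simp [genMajorant]
    _ ≤ ∑ i, eLpNorm (fun n => ∑' k, ‖C i k‖ₑ * cubeSup (Φ i) (n - k)) p Measure.count :=
        eLpNorm_sum_le (fun i _ => (measurable_of_countable _).aestronglyMeasurable) hp
    _ ≤ ∑ i, WNorm 1 (Φ i) * lpNorm p (C i) := by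
        gcongr with i
        rw [WNorm_one, lpNorm_eq_eLpNorm_count hp0, ← eLpNorm_enorm]
        exact eLpNorm_conv_count_le _ _ hp
    _ ≤ ∑ i, WNormVec Φ * lpNorm p (C i) := by
        gcongr with i
        exact Finset.single_le_sum (f := fun i => WNorm 1 (Φ i)) (fun _ _ => zero_le) (by simp)
    _ = vlpNorm p C * WNormVec Φ := by
        rw [← Finset.mul_sum, mul_comm]
        rfl

end GeneratedFunction

open MeasureTheory ENNReal in
theorem genFun_Wp_bound_general
    (d r : ℕ) (p : ℝ≥0∞) (hp : 1 ≤ p)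
    (Φ : Fin r → Euc d → ℂ) (hΦ : ∀ i, WNorm 1 (Φ i) < ∞)
    (C : Fin r → (Fin d → ℤ) → ℂ) (hC : vlpNorm p C < ∞) :
    (∀ᵐ x ∂(volume : Measure (Euc d)),
        Summable (fun q : (Fin d → ℤ) × Fin r => ‖C q.2 q.1 * Φ q.2 (x - zemb q.1)‖)) ∧
      WNorm p (genFun Φ C) ≤ vlpNorm p C * WNormVec Φ := by
  have hp0 : p ≠ 0 := (zero_lt_one.trans_le hp).ne'
  have hbound := eLpNorm_genMajorant_le Φ C hp
  have hfinite : ∀ n, genMajorant Φ C n < ∞ := fun n =>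
    (enorm_le_eLpNorm_count _ n hp0).trans_lt <|
      hbound.trans_lt (ENNReal.mul_lt_top hC (ENNReal.sum_lt_top.2 fun i _ => hΦ i))
  refine ⟨ae_of_forall_ae_unitCube fun n => ?_, ?_⟩
  · filter_upwards [ae_tsum_enorm_le_genMajorant Φ C n] with y hy
    exact tsum_enorm_ne_top_iff_summable_norm.1 (hy.trans_lt (hfinite n)).ne
  · rw [WNorm_eq_eLpNorm_count hp0]
    exact (eLpNorm_mono_enorm fun n => by simpa using cubeSup_genFun_le Φ C n).trans hbound

open MeasureTheory ENNReal in
/-- inequality (4.2.4): for measurable generators with finite `W¹` norm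
and `ℓ^p` coefficients, the generating series converges absolutely a.e. and
`‖f‖_{W^p} ≤ ‖C‖_{(ℓ^p)^{(r)}} ‖Φ‖_{(W¹)^{(r)}}`. -/
theorem genFun_Wp_bound
    (d r : ℕ) (p : ℝ≥0∞) (hp : 1 ≤ p)
    (Φ : Fin r → Euc d → ℂ) (hΦm : ∀ i, Measurable (Φ i)) (hΦ : ∀ i, WNorm 1 (Φ i) < ∞)
    (C : Fin r → (Fin d → ℤ) → ℂ) (hC : vlpNorm p C < ∞) :
    (∀ᵐ x ∂(volume : Measure (Euc d)),
        Summable (fun q : (Fin d → ℤ) × Fin r => ‖C q.2 q.1 * Φ q.2 (x - zemb q.1)‖)) ∧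
      WNorm p (genFun Φ C) ≤ vlpNorm p C * WNormVec Φ :=
  genFun_Wp_bound_general d r p hp Φ hΦ C hC
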